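/- arXiv:2206.10832 — 6 statements merged into one kernel-verified Lean document; each statement's English description precedes it below -/
import Mathlib

section
/- Let {a_k} ⊂ R_+ satisfy a_{k+1} = ρ a_k + q a_k², with 0 < ρ < 1 and q > 0. If a_0 < ρ(1-ρ)/q, then for every integer k ≥ 0, a_k ≤ (1 - a_0 q /(ρ(1-ρ)))^{-1} a_0 ρ^k. -/
theorem quad_recursion_linear_bound (ρ q : ℝ) (hρ0 : 0 < ρ) (hρ1 : ρ < 1)
    (hq : 0 < q) (a : ℕ → ℝ) (ha : ∀ k, 0 ≤ a k)
    (hrec : ∀ k, a (k + 1) = ρ * a k + q * a k ^ 2)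
    (ha0 : a 0 < ρ * (1 - ρ) / q) :
    ∀ k : ℕ, a k ≤ (1 - a 0 * q / (ρ * (1 - ρ)))⁻¹ * a 0 * ρ ^ k := by
  have h1ρ : 0 < 1 - ρ := by linarith
  have hρρ : 0 < ρ * (1 - ρ) := mul_pos hρ0 h1ρ
  set K : ℝ := q / (ρ * (1 - ρ)) with hK
  have hK0 : 0 < K := div_pos hq hρρ
  intro k
  rcases eq_or_lt_of_le (ha 0) with h0 | h0
  · have hz : ∀ k, a k = 0 := by
      intro k
      induction k with
      | zero => exact h0.symm
      | succ n ih => rw [hrec n, ih]; ring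
    rw [hz k, hz 0]
    simp
  · have hpos : ∀ k, 0 < a k := by
      intro k
      induction k with
      | zero => exact h0
      | succ n ih => rw [hrec n]; positivity
    have key : ∀ k, (1 / a 0 - K) / ρ ^ k + K ≤ 1 / a k := by
      intro k
      induction k with
      | zero => simp
      | succ n ih =>
        have han := hpos n
        have h1 : (1 / a n) / ρ - q / ρ ^ 2 ≤ 1 / a (n + 1) := by
          rw [hrec n, ← sub_nonneg]
          have hd : 0 < ρ * a n + q * a n ^ 2 := by positivity
          have heq : 1 / (ρ * a n + q * a n ^ 2) - ((1 / a n) / ρ - q / ρ ^ 2)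
              = q ^ 2 * a n / (ρ ^ 2 * (ρ + q * a n)) := by
            field_simp
            ring
          rw [heq]
          positivity
        have h2 : (1 / a 0 - K) / ρ ^ (n + 1) + K
            ≤ ((1 / a 0 - K) / ρ ^ n + K) / ρ - q / ρ ^ 2 := by
          have heq : ((1 / a 0 - K) / ρ ^ n + K) / ρ - q / ρ ^ 2
              = (1 / a 0 - K) / ρ ^ (n + 1) + K := by
            rw [hK]
            field_simp
            ring
          rw [heq]
        calc (1 / a 0 - K) / ρ ^ (n + 1) + K
            ≤ ((1 / a 0 - K) / ρ ^ n + K) / ρ - q / ρ ^ 2 := h2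
          _ ≤ (1 / a n) / ρ - q / ρ ^ 2 := by gcongr
          _ ≤ 1 / a (n + 1) := h1
    have haK : a 0 * K < 1 := by
      rw [hK, ← mul_div_assoc, div_lt_one hρρ]
      exact (lt_div_iff₀ hq).mp ha0
    have hD : 0 < 1 / a 0 - K := by
      have heq : 1 / a 0 - K = (1 - a 0 * K) / a 0 := by field_simp [ne_of_gt h0]
      rw [heq]
      exact div_pos (by linarith) h0
    set D : ℝ := 1 / a 0 - K with hDdef
    have hk := key k
    have hρk : (0:ℝ) < ρ ^ k := pow_pos hρ0 k
    have hak := hpos k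
    have h3 : D / ρ ^ k ≤ 1 / a k := le_trans (by linarith) hk
    have h4 : a k ≤ ρ ^ k / D := by
      rw [div_le_div_iff₀ hρk hak] at h3
      rw [le_div_iff₀ hD]
      linarith [h3]
    have h5 : (1 - a 0 * q / (ρ * (1 - ρ)))⁻¹ * a 0 * ρ ^ k = ρ ^ k / D := by
      have h1aK : 1 - a 0 * (q / (ρ * (1 - ρ))) ≠ 0 :=
        ne_of_gt (by rw [← hK]; linarith [haK])
      rw [hDdef, hK]
      field_simp
    rw [h5]
    exact h4
end

section
/- Let {b_k} ⊂ R_+ satisfy b_{k+1} ≤ ρ b_k + q b_k² for all k, with 0 < ρ < 1 and q > 0. If b_0 < ρ(1-ρ)/q =: c, then for every integer k ≥ 0, b_k ≤ (1 - b_0/c)^{-1} b_0 ρ^k; in particular b_k → 0. -/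
open Filter

theorem quad_recursive_inequality_linear_bound (ρ q : ℝ) (hρ0 : 0 < ρ) (hρ1 : ρ < 1)
    (hq : 0 < q) (b : ℕ → ℝ) (hb : ∀ k, 0 ≤ b k)
    (hrec : ∀ k, b (k + 1) ≤ ρ * b k + q * b k ^ 2)
    (hb0 : b 0 < ρ * (1 - ρ) / q) :
    (∀ k : ℕ, b k ≤ (1 - b 0 / (ρ * (1 - ρ) / q))⁻¹ * b 0 * ρ ^ k) ∧
      Tendsto b atTop (nhds 0) := by
  set c : ℝ := ρ * (1 - ρ) / q with hc_def
  have h1ρ : 0 < 1 - ρ := by linarith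
  have hc : 0 < c := by positivity
  have hb00 : 0 ≤ b 0 := hb 0
  have hcb0 : 0 < c - b 0 := by linarith
  have hqc : q * c = ρ * (1 - ρ) := by
    rw [hc_def]
    field_simp
  have key : ∀ k, b k ≤ c * b 0 * ρ ^ k / (b 0 * ρ ^ k + (c - b 0)) := by
    intro k
    induction k with
    | zero =>
      simp only [pow_zero, mul_one]
      rw [show b 0 + (c - b 0) = c by ring, mul_comm c (b 0), mul_div_assoc,
        div_self hc.ne', mul_one]
    | succ k ih =>
      have hρk : (0:ℝ) < ρ ^ k := pow_pos hρ0 k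
      have hρk1 : (0:ℝ) < ρ ^ (k+1) := pow_pos hρ0 (k+1)
      have hd : (0:ℝ) < b 0 * ρ ^ k + (c - b 0) := by nlinarith
      have hd' : (0:ℝ) < b 0 * ρ ^ (k+1) + (c - b 0) := by nlinarith
      set g : ℝ := c * b 0 * ρ ^ k / (b 0 * ρ ^ k + (c - b 0)) with hg
      have hg0 : 0 ≤ g := by positivity
      have h2 : b (k+1) ≤ ρ * g + q * g ^ 2 := by
        have h := hrec k
        nlinarith [mul_nonneg hρ0.le (sub_nonneg.mpr ih),
          mul_nonneg (mul_nonneg hq.le (sub_nonneg.mpr ih)) (add_nonneg hg0 (hb k)),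
          hb k]
      have h3 : ρ * g + q * g ^ 2 ≤ c * b 0 * ρ ^ (k+1) / (b 0 * ρ ^ (k+1) + (c - b 0)) := by
        have e : ρ * g + q * g ^ 2 =
            (ρ * (c * b 0 * ρ ^ k) * (b 0 * ρ ^ k + (c - b 0)) + q * (c * b 0 * ρ ^ k) ^ 2) /
              (b 0 * ρ ^ k + (c - b 0)) ^ 2 := by
          rw [hg]
          field_simp
        rw [e, div_le_div_iff₀ (by positivity) hd']
        have hps : ρ ^ (k+1) ≤ ρ ^ k :=
          pow_le_pow_of_le_one hρ0.le hρ1.le (Nat.le_succ k)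
        have hdd' : b 0 * ρ ^ (k+1) + (c - b 0) ≤ b 0 * ρ ^ k + (c - b 0) := by
          have := mul_le_mul_of_nonneg_left hps hb00
          linarith
        have heq : c * b 0 * ρ ^ (k+1) * (b 0 * ρ ^ k + (c - b 0)) ^ 2 -
            (ρ * (c * b 0 * ρ ^ k) * (b 0 * ρ ^ k + (c - b 0)) + q * (c * b 0 * ρ ^ k) ^ 2) *
              (b 0 * ρ ^ (k+1) + (c - b 0)) =
            q * c ^ 2 * (b 0) ^ 2 * (ρ ^ k) ^ 2 *
              ((b 0 * ρ ^ k + (c - b 0)) - (b 0 * ρ ^ (k+1) + (c - b 0))) := by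
          linear_combination (-(b 0) ^ 2 * (ρ ^ k) ^ 2 * c * (b 0 * ρ ^ k + (c - b 0))) * hqc
        nlinarith [heq, mul_nonneg
          (show (0:ℝ) ≤ q * c ^ 2 * (b 0) ^ 2 * (ρ ^ k) ^ 2 by positivity)
          (sub_nonneg.mpr hdd')]
      linarith
  have hinv : (1 - b 0 / c)⁻¹ = c / (c - b 0) := by
    have h1 : 1 - b 0 / c = (c - b 0) / c := by field_simp
    rw [h1, inv_div]
  have bound : ∀ k : ℕ, b k ≤ (1 - b 0 / c)⁻¹ * b 0 * ρ ^ k := by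
    intro k
    refine (key k).trans ?_
    have hρk : (0:ℝ) < ρ ^ k := pow_pos hρ0 k
    have hd : (0:ℝ) < b 0 * ρ ^ k + (c - b 0) := by nlinarith
    have hrhs : (1 - b 0 / c)⁻¹ * b 0 * ρ ^ k = c * b 0 * ρ ^ k / (c - b 0) := by
      rw [hinv]; ring
    rw [hrhs, div_le_div_iff₀ hd hcb0]
    nlinarith [mul_nonneg (mul_nonneg (mul_nonneg hc.le hb00) hρk.le)
      (mul_nonneg hb00 hρk.le)]
  refine ⟨bound, ?_⟩
  have hlim : Tendsto (fun k : ℕ => (1 - b 0 / c)⁻¹ * b 0 * ρ ^ k) atTop (nhds 0) := by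
    rw [show (0:ℝ) = (1 - b 0 / c)⁻¹ * b 0 * 0 by ring]
    exact (tendsto_pow_atTop_nhds_zero_of_lt_one hρ0.le hρ1).const_mul _
  exact squeeze_zero hb bound hlim
end

section
/- Let H ∈ R^{N×N} be symmetric positive definite, γ ∈ R^N, and η > 0 satisfy η(λ_1(H) + 2γ_i) < 2 for all i, where λ_1(H) is the largest eigenvalue of H. Then the matrix M_η = I_N - η (I_N - η diag(γ))^{-1} H has spectral radius strictly less than 1. -/
open Matrix

/-- `μ : ℂ` is an eigenvalue of the real matrix `A`. -/
def IsEigOf {n : Type*} [Fintype n] [DecidableEq n] (A : Matrix n n ℝ) (μ : ℂ) : Prop :=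
  ∃ v : n → ℂ, v ≠ 0 ∧ (A.map (fun x => (x : ℂ))) *ᵥ v = μ • v

/-- Spectral radius: the supremum of moduli of (complex) eigenvalues. -/
noncomputable def specRad {n : Type*} [Fintype n] [DecidableEq n] (A : Matrix n n ℝ) : ℝ :=
  sSup {r : ℝ | ∃ μ : ℂ, IsEigOf A μ ∧ r = ‖μ‖}

/-!
If `M v = μ v` with `v ≠ 0` and `D = I - η diag(γ)`, then `η H v = (1 - μ) D v`, so
`η v*Hv = (1 - μ) v*Dv`. The step-size condition makes `2D - ηH` positive definite, as it is
`diag(2 - 2ηγᵢ - ηλ₁) > 0` plus `η (λ₁ I - H) ≥ 0`. With `H > 0` this gives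
`0 < η v*Hv < 2 v*Dv`, so `1 - μ` is real and lies in `(0, 2)`, i.e. `|μ| < 1`. A matrix has
finitely many eigenvalues, so the spectral radius is attained and is `< 1` as well.
-/

open scoped ComplexOrder

variable {n : Type*} [Fintype n]

theorem Matrix.star_dotProduct_map_ofReal_mulVec {A : Matrix n n ℝ} (hA : A.IsSymm)
    (v : n → ℂ) :
    star v ⬝ᵥ (A.map ((↑) : ℝ → ℂ) *ᵥ v) =
      ↑((fun i ↦ (v i).re) ⬝ᵥ A *ᵥ (fun i ↦ (v i).re) +
        (fun i ↦ (v i).im) ⬝ᵥ A *ᵥ (fun i ↦ (v i).im)) := by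
  apply Complex.ext
  · simp [dotProduct, mulVec, Finset.mul_sum, Finset.sum_add_distrib]
  · simp only [Complex.ofReal_im, dotProduct, mulVec, Pi.star_apply, RCLike.star_def, map_apply,
      Finset.mul_sum, Complex.im_sum, Complex.mul_im, Complex.conj_re, Complex.ofReal_re,
      zero_mul, add_zero, Complex.conj_im, Complex.mul_re, sub_zero, neg_mul,
      Finset.sum_add_distrib, Finset.sum_neg_distrib, add_neg_eq_zero]
    rw [Finset.sum_comm]
    refine Finset.sum_congr rfl fun i _ ↦ Finset.sum_congr rfl fun j _ ↦ ?_
    rw [hA.apply]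
    ring

theorem Matrix.PosDef.map_ofReal {A : Matrix n n ℝ} (hA : A.PosDef) :
    (A.map ((↑) : ℝ → ℂ)).PosDef := by
  refine .of_dotProduct_mulVec_pos (hA.1.map _ fun x ↦ by simp) fun v hv ↦ ?_
  rw [star_dotProduct_map_ofReal_mulVec (isHermitian_iff_isSymm.mp hA.1), Complex.zero_lt_real]
  have hpos {x : n → ℝ} (hx : x ≠ 0) : 0 < x ⬝ᵥ A *ᵥ x := by
    simpa only [star_trivial] using hA.dotProduct_mulVec_pos hx
  have hnonneg (x : n → ℝ) : 0 ≤ x ⬝ᵥ A *ᵥ x := by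
    simpa only [star_trivial] using hA.posSemidef.dotProduct_mulVec_nonneg x
  by_cases hre : (fun i ↦ (v i).re) = 0
  · have him : (fun i ↦ (v i).im) ≠ 0 := fun him ↦
      hv (funext fun i ↦ Complex.ext (congrFun hre i) (congrFun him i))
    exact add_pos_of_nonneg_of_pos (hnonneg _) (hpos him)
  · exact add_pos_of_pos_of_nonneg (hpos hre) (hnonneg _)

theorem Matrix.IsHermitian.posSemidef_smul_one_sub {𝕜 : Type*} [RCLike 𝕜] [DecidableEq n]
    {A : Matrix n n 𝕜} (hA : A.IsHermitian) {c : ℝ} (hc : ∀ i, hA.eigenvalues i ≤ c) :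
    (c • 1 - A).PosSemidef := by
  set U : Matrix n n 𝕜 := ↑hA.eigenvectorUnitary
  have hU : U * star U = 1 := Unitary.mul_star_self_of_mem hA.eigenvectorUnitary.2
  have hdiag : diagonal (fun i ↦ ((c - hA.eigenvalues i : ℝ) : 𝕜)) =
      c • 1 - diagonal (RCLike.ofReal ∘ hA.eigenvalues) := by
    ext i j
    by_cases h : i = j <;> simp [h, RCLike.real_smul_eq_coe_mul]
  have hconj :
      c • 1 - A = U * diagonal (fun i ↦ ((c - hA.eigenvalues i : ℝ) : 𝕜)) * star U := by
    conv_lhs => rw [hA.spectral_theorem]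
    rw [Unitary.conjStarAlgAut_apply, hdiag, mul_sub, sub_mul, mul_smul_comm, mul_one,
      smul_mul_assoc, hU]
  rw [hconj, Unitary.isUnit_coe.posSemidef_star_right_conjugate_iff, posSemidef_diagonal_iff]
  intro i
  simpa using hc i

theorem Complex.norm_lt_one_of_eq_one_sub_mul {k q μ : ℂ} (hk : 0 < k) (hqk : 0 < 2 * q - k)
    (h : k = (1 - μ) * q) : ‖μ‖ < 1 := by
  obtain ⟨hk_re, hk_im⟩ := Complex.pos_iff.mp hk
  obtain ⟨hqk_re, hqk_im⟩ := Complex.pos_iff.mp hqk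
  simp only [Complex.sub_re, Complex.sub_im, Complex.mul_re, Complex.mul_im, Complex.re_ofNat,
    Complex.im_ofNat, zero_mul, sub_zero, add_zero] at hqk_re hqk_im
  have hq : q = (q.re : ℂ) := Complex.ext rfl (by rw [Complex.ofReal_im]; linarith)
  have hk' : k = (k.re : ℂ) := Complex.ext rfl (by simp [← hk_im])
  have hq_pos : 0 < q.re := by linarith
  have hμ : μ = ((1 - k.re / q.re : ℝ) : ℂ) := by
    rw [hk', hq] at h
    push_cast
    field_simp
    linear_combination h
  rw [hμ, Complex.norm_real, Real.norm_eq_abs, abs_sub_lt_iff]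
  constructor
  · linarith [div_pos hk_re hq_pos]
  · linarith [(div_lt_iff₀ hq_pos).mpr (show k.re < 2 * q.re by linarith)]

variable [DecidableEq n]

theorem finite_setOf_isEigOf (A : Matrix n n ℝ) : {μ | IsEigOf A μ}.Finite :=
  (Module.End.finite_hasEigenvalue (toLin' (A.map ((↑) : ℝ → ℂ)))).subset
    fun _ ⟨v, hv0, hv⟩ ↦ Module.End.hasEigenvalue_of_hasEigenvector
      (Module.End.hasEigenvector_iff.mpr
        ⟨Module.End.mem_eigenspace_iff.mpr (by simpa using hv), hv0⟩)

theorem specRad_lt_of_forall_norm_lt {A : Matrix n n ℝ} {c : ℝ} (hc : 0 < c)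
    (h : ∀ μ, IsEigOf A μ → ‖μ‖ < c) : specRad A < c := by
  set S := {r : ℝ | ∃ μ : ℂ, IsEigOf A μ ∧ r = ‖μ‖}
  have hS : S.Finite := ((finite_setOf_isEigOf A).image norm).subset
    fun _ ⟨μ, hμ, hr⟩ ↦ ⟨μ, hμ, hr.symm⟩
  change sSup S < c
  rcases S.eq_empty_or_nonempty with hempty | hne
  · rwa [hempty, Real.sSup_empty]
  · obtain ⟨μ, hμ, hr⟩ := hne.csSup_mem hS
    exact hr ▸ h μ hμ

theorem IsEigOf.norm_lt_one {D K M : Matrix n n ℝ} (hK : K.PosDef) (hDK : (2 • D - K).PosDef)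
    (hM : D * M = D - K) {μ : ℂ} (hμ : IsEigOf M μ) : ‖μ‖ < 1 := by
  obtain ⟨v, hv0, hv⟩ := hμ
  let φ := Complex.ofRealHom.mapMatrix (m := n)
  have hKv : φ K *ᵥ v = (1 - μ) • (φ D *ᵥ v) := by
    have := congrArg (· *ᵥ v) (congrArg φ hM)
    simp only [map_mul, map_sub, ← mulVec_mulVec, sub_mulVec] at this
    change φ M *ᵥ v = _ at hv
    rw [hv, mulVec_smul] at this
    rw [sub_smul, one_smul, this, sub_sub_cancel]
  refine Complex.norm_lt_one_of_eq_one_sub_mul (q := star v ⬝ᵥ (φ D *ᵥ v))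
    (hK.map_ofReal.dotProduct_mulVec_pos hv0) ?_ ?_
  · have := hDK.map_ofReal.dotProduct_mulVec_pos hv0
    change 0 < star v ⬝ᵥ (φ (2 • D - K) *ᵥ v) at this
    rwa [map_sub, map_nsmul, sub_mulVec, dotProduct_sub, smul_mulVec, dotProduct_smul,
      nsmul_eq_mul, Nat.cast_ofNat] at this
  · change star v ⬝ᵥ (φ K *ᵥ v) = _
    rw [hKv, dotProduct_smul, smul_eq_mul]

theorem specRad_M_lt_one {N : ℕ} (H : Matrix (Fin (N + 1)) (Fin (N + 1)) ℝ)
    (hH : H.PosDef) (γ : Fin (N + 1) → ℝ) (η : ℝ) (hη : 0 < η)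
    (hstep : ∀ i, η * ((⨆ j, hH.1.eigenvalues j) + 2 * γ i) < 2) :
    specRad ((1 : Matrix (Fin (N + 1)) (Fin (N + 1)) ℝ) -
        η • ((1 - η • Matrix.diagonal γ)⁻¹ * H)) < 1 := by
  set lam1 := ⨆ j, hH.1.eigenvalues j
  have hle : ∀ i, hH.1.eigenvalues i ≤ lam1 := le_ciSup (Set.finite_range _).bddAbove
  have hlam1 : 0 < lam1 := (hH.eigenvalues_pos 0).trans_le (hle 0)
  set D := 1 - η • diagonal γ
  have hD : D = diagonal fun i ↦ 1 - η * γ i := by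
    ext i j
    by_cases h : i = j <;> simp [D, h]
  have hDdet : IsUnit D.det := by
    rw [hD, det_diagonal]
    refine (Finset.prod_pos fun i _ ↦ ?_).ne'.isUnit
    nlinarith [hstep i, mul_pos hη hlam1]
  have h2DK : 2 • D - η • H =
      diagonal (fun i ↦ 2 * (1 - η * γ i) - η * lam1) + η • (lam1 • 1 - H) := by
    ext i j
    by_cases h : i = j
    · simp only [hD, two_smul, diagonal_add, h, Matrix.sub_apply, diagonal_apply_eq,
        Matrix.smul_apply, smul_eq_mul, Matrix.add_apply, one_apply_eq, mul_one]
      ring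
    · simp [hD, h, two_smul]
  refine specRad_lt_of_forall_norm_lt one_pos fun μ hμ ↦
    hμ.norm_lt_one (D := D) (hH.smul hη) ?_ ?_
  · rw [h2DK]
    exact (posDef_diagonal_iff.mpr fun i ↦ by linarith [hstep i]).add_posSemidef
      ((hH.1.posSemidef_smul_one_sub hle).smul hη.le)
  · rw [mul_sub, mul_one, mul_smul_comm, ← mul_assoc, mul_nonsing_inv _ hDdet, one_mul]
end

section
/- Let C = {x ∈ R^{2N} : x_{2i-1}² + x_{2i}² = 1 for i = 1,…,N} be the unit-modulus set, and define the coordinatewise projection P_C by projecting each coordinate pair onto the unit circle (with P([0,0]) = [1,0]). Then for any x ∈ C and δ ∈ R^{2N}, P_C(x+δ) = x + Z Zᵀ δ + q(δ), where Z = Σ_i e_i e_iᵀ ⊗ v_i with v_i = [-x_{2i}, x_{2i-1}]ᵀ, and ‖q(δ)‖ ≤ 2‖δ‖². -/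
/-- Euclidean norm of the `i`-th coordinate pair. -/
noncomputable def pairNorm {N : ℕ} (y : Fin N × Fin 2 → ℝ) (i : Fin N) : ℝ :=
  Real.sqrt (y (i, 0) ^ 2 + y (i, 1) ^ 2)

open Classical in
/-- Coordinatewise projection onto the unit-modulus set: each coordinate pair is projected
onto the unit circle, with the convention that the zero pair maps to `[1, 0]ᵀ`. -/
noncomputable def umProj {N : ℕ} (y : Fin N × Fin 2 → ℝ) : Fin N × Fin 2 → ℝ :=
  fun p =>
    if y (p.1, 0) = 0 ∧ y (p.1, 1) = 0 then (if p.2 = 0 then 1 else 0)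
    else y p / pairNorm y p.1

/-- Euclidean norm on `ℝ^{2N}`. -/
noncomputable def vecNorm {N : ℕ} (y : Fin N × Fin 2 → ℝ) : ℝ :=
  Real.sqrt (∑ p, y p ^ 2)

/-- The tangent basis vectors `vᵢ = [-x_{2i}, x_{2i-1}]ᵀ`. -/
def tangentV {N : ℕ} (x : Fin N × Fin 2 → ℝ) (i : Fin N) (a : Fin 2) : ℝ :=
  if a = 0 then -x (i, 1) else x (i, 0)

set_option maxHeartbeats 1000000

lemma key (s t r : ℝ) (hr : 0 < r) (hr2 : r^2 = (1+s)^2 + t^2) :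
    r*(2 + t^2 - 4*(s^2+t^2)^2) ≤ 2*(1+s+t^2) := by
  rcases le_or_gt (2 + t^2 - 4*(s^2+t^2)^2) 0 with hP | hP
  · rcases le_or_gt 0 (1+s+t^2) with h1 | h1
    · have : r*(2 + t^2 - 4*(s^2+t^2)^2) ≤ 0 := mul_nonpos_of_nonneg_of_nonpos hr.le hP
      linarith
    · have hs : s < -1 - t^2 := by linarith
      have hns : (0:ℝ) ≤ -(1+s) := by nlinarith [sq_nonneg t]
      have hr3 : -(1+s) ≤ r := by nlinarith [sq_nonneg (r + (1+s))]
      have hd : 4*(s^2+t^2)^2 - 4 - t^2 ≥ 0 := by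
        nlinarith [sq_nonneg t, sq_nonneg (t^2), sq_nonneg (s^2+t^2), sq_nonneg (s^2 - 1 - t^2), sq_nonneg (s+1+t^2)]
      nlinarith [mul_le_mul_of_nonneg_right hr3 (by linarith : (0:ℝ) ≤ 4*(s^2+t^2)^2 - 2 - t^2), mul_nonneg hns hd]
  · have hd : s^2 + t^2 < 1 := by nlinarith [sq_nonneg (s^2+t^2-1)]
    have hw : 0 < 1 + s := by nlinarith
    have hr1 : 1 + s ≤ r := by nlinarith [sq_nonneg (r - (1+s))]
    have hm : 2*(1+s)*(r - (1+s)) ≤ t^2 := by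
      have h2 : 2*(1+s)*(r - (1+s)) ≤ (r+(1+s))*(r - (1+s)) :=
        mul_le_mul_of_nonneg_right (by linarith) (by linarith)
      nlinarith [h2]
    have hpoly : (2*(1+s)^2+t^2)*(2+t^2-4*(s^2+t^2)^2) ≤ 4*(1+s)*(1+s+t^2) := by
      nlinarith [sq_nonneg (s*t), sq_nonneg (t*t), sq_nonneg ((s+1)*(s^2+t^2)), sq_nonneg (t*(s^2+t^2)), sq_nonneg (s*(s^2+t^2)), mul_nonneg (mul_nonneg (sq_nonneg t) (sq_nonneg s)) (sq_nonneg (s+1)), mul_nonneg (sq_nonneg (s*t)) (sq_nonneg s), mul_nonneg (sq_nonneg t) (sq_nonneg (s+1)), sq_nonneg (t*(2*s+1)), sq_nonneg (s^2+t^2)]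
    nlinarith [mul_le_mul_of_nonneg_right hm hP.le, mul_le_mul_of_nonneg_left hpoly hw.le]

lemma pair (a b u v : ℝ) (hab : a^2 + b^2 = 1) :
    ((if a + u = 0 ∧ b + v = 0 then (1:ℝ)
        else (a+u)/Real.sqrt ((a+u)^2+(b+v)^2)) - (a + -b * (-b*u + a*v)))^2
  + ((if a + u = 0 ∧ b + v = 0 then (0:ℝ)
        else (b+v)/Real.sqrt ((a+u)^2+(b+v)^2)) - (b + a * (-b*u + a*v)))^2
  ≤ 4*(u^2+v^2)^2 := by
  by_cases h0 : a + u = 0 ∧ b + v = 0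
  · obtain ⟨h1, h2⟩ := h0
    have hu : u = -a := by linarith
    have hv : v = -b := by linarith
    subst hu hv
    simp only [h1, h2, and_self, if_true]
    nlinarith [sq_nonneg b, sq_nonneg (1-a), sq_nonneg (1+a)]
  · simp only [if_neg h0]
    set r := Real.sqrt ((a+u)^2+(b+v)^2) with hrdef
    have hrsq : r^2 = (a+u)^2+(b+v)^2 := Real.sq_sqrt (by positivity)
    have hrpos : 0 < r := by
      rw [hrdef]
      apply Real.sqrt_pos.mpr
      rcases not_and_or.mp h0 with h | h
      · positivity
      · positivity
    have hrne : r ≠ 0 := hrpos.ne'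
    have hkey := key (a*u+b*v) (-b*u+a*v) r hrpos (by
      rw [hrsq]; linear_combination (1-u^2-v^2)*hab)
    have hNid : ((a+u) - r*(a + -b*(-b*u+a*v)))^2 + ((b+v) - r*(b + a*(-b*u+a*v)))^2
        = r^2*(2+(-b*u+a*v)^2) - 2*r*(1+(a*u+b*v)+(-b*u+a*v)^2) := by
      linear_combination -hrsq + (r^2*(1+(-b*u+a*v)^2) - 2*r)*hab
    have h4 : ((a*u+b*v)^2 + (-b*u+a*v)^2)^2 = (u^2+v^2)^2 := by
      have : (a*u+b*v)^2 + (-b*u+a*v)^2 = u^2+v^2 := by linear_combination (u^2+v^2)*hab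
      rw [this]
    have hkr := mul_le_mul_of_nonneg_left hkey hrpos.le
    have hN : ((a+u) - r*(a + -b*(-b*u+a*v)))^2 + ((b+v) - r*(b + a*(-b*u+a*v)))^2
        ≤ 4*(u^2+v^2)^2 * r^2 := by
      rw [hNid]
      nlinarith [hkr, h4]
    have hsum : ((a+u)/r - (a + -b*(-b*u+a*v)))^2 + ((b+v)/r - (b + a*(-b*u+a*v)))^2
        = (((a+u) - r*(a + -b*(-b*u+a*v)))^2 + ((b+v) - r*(b + a*(-b*u+a*v)))^2)/r^2 := by
      field_simp
    rw [hsum, div_le_iff₀ (by positivity)]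
    exact hN

theorem umProj_taylor {N : ℕ} (x δ : Fin N × Fin 2 → ℝ)
    (hx : ∀ i, x (i, 0) ^ 2 + x (i, 1) ^ 2 = 1) :
    vecNorm (fun p =>
        umProj (x + δ) p -
          (x p + tangentV x p.1 p.2 *
            (tangentV x p.1 0 * δ (p.1, 0) + tangentV x p.1 1 * δ (p.1, 1)))) ≤
      2 * (vecNorm δ) ^ 2 := by
  set Q : Fin N × Fin 2 → ℝ := fun p =>
        umProj (x + δ) p -
          (x p + tangentV x p.1 p.2 *
            (tangentV x p.1 0 * δ (p.1, 0) + tangentV x p.1 1 * δ (p.1, 1))) with hQ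
  have hδ : (vecNorm δ)^2 = ∑ p, δ p ^ 2 := Real.sq_sqrt (by positivity)
  have hpairwise : ∀ i : Fin N, Q (i,0)^2 + Q (i,1)^2 ≤ 4*(δ (i,0)^2 + δ (i,1)^2)^2 := by
    intro i
    have h := pair (x (i,0)) (x (i,1)) (δ (i,0)) (δ (i,1)) (hx i)
    have e0 : Q (i,0) = (if x (i,0) + δ (i,0) = 0 ∧ x (i,1) + δ (i,1) = 0 then (1:ℝ)
        else (x (i,0)+δ (i,0))/Real.sqrt ((x (i,0)+δ (i,0))^2+(x (i,1)+δ (i,1))^2))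
        - (x (i,0) + -x (i,1) * (-x (i,1)*δ (i,0) + x (i,0)*δ (i,1))) := by
      simp [hQ, umProj, pairNorm, tangentV, Pi.add_apply]
    have e1 : Q (i,1) = (if x (i,0) + δ (i,0) = 0 ∧ x (i,1) + δ (i,1) = 0 then (0:ℝ)
        else (x (i,1)+δ (i,1))/Real.sqrt ((x (i,0)+δ (i,0))^2+(x (i,1)+δ (i,1))^2))
        - (x (i,1) + x (i,0) * (-x (i,1)*δ (i,0) + x (i,0)*δ (i,1))) := by
      simp [hQ, umProj, pairNorm, tangentV, Pi.add_apply]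
    rw [e0, e1]
    exact h
  have hsumQ : ∑ p, Q p ^ 2 = ∑ i : Fin N, (Q (i,0)^2 + Q (i,1)^2) := by
    rw [Fintype.sum_prod_type]
    exact Finset.sum_congr rfl fun i _ => by rw [Fin.sum_univ_two]
  have hsumδ : ∑ p, δ p ^ 2 = ∑ i : Fin N, (δ (i,0)^2 + δ (i,1)^2) := by
    rw [Fintype.sum_prod_type]
    exact Finset.sum_congr rfl fun i _ => by rw [Fin.sum_univ_two]
  have hb : ∑ p, Q p ^ 2 ≤ (2 * ∑ p, δ p ^ 2)^2 := by
    rw [hsumQ, hsumδ]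
    calc ∑ i : Fin N, (Q (i,0)^2 + Q (i,1)^2)
        ≤ ∑ i : Fin N, 4*(δ (i,0)^2 + δ (i,1)^2)^2 :=
          Finset.sum_le_sum fun i _ => hpairwise i
      _ = 4 * ∑ i : Fin N, (δ (i,0)^2 + δ (i,1)^2)^2 := by rw [Finset.mul_sum]
      _ ≤ 4 * (∑ i : Fin N, (δ (i,0)^2 + δ (i,1)^2))^2 := by
          have := Finset.sum_sq_le_sq_sum_of_nonneg
            (s := Finset.univ) (f := fun i : Fin N => δ (i,0)^2 + δ (i,1)^2)
            (fun i _ => by positivity)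
          linarith
      _ = (2 * ∑ i : Fin N, (δ (i,0)^2 + δ (i,1)^2))^2 := by ring
  rw [vecNorm, hδ]
  calc Real.sqrt (∑ p, Q p ^ 2) ≤ Real.sqrt ((2 * ∑ p, δ p ^ 2)^2) := Real.sqrt_le_sqrt hb
    _ = 2 * ∑ p, δ p ^ 2 := Real.sqrt_sq (by positivity)
end

section
/- Let x* ∈ R^{2N} lie in the unit-modulus set C and suppose there exists γ ∈ R^N with Aᵀ(A x* - b) = (diag(γ) ⊗ I_2) x* and γ_i < 1/η for all i, where η > 0. Then x* is a fixed point of projected gradient descent: x* = P_C(x* - η Aᵀ(A x* - b)). -/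
open Matrix

theorem stationary_is_fixed_point {M N : ℕ}
    (A : Matrix (Fin M × Fin 2) (Fin N × Fin 2) ℝ) (b : Fin M × Fin 2 → ℝ)
    (x : Fin N × Fin 2 → ℝ) (hx : ∀ i, x (i, 0) ^ 2 + x (i, 1) ^ 2 = 1)
    (γ : Fin N → ℝ) (η : ℝ) (hη : 0 < η)
    (hstat : Aᵀ *ᵥ (A *ᵥ x - b) = fun p => γ p.1 * x p)
    (hγ : ∀ i, γ i < 1 / η) :
    umProj (x - η • (Aᵀ *ᵥ (A *ᵥ x - b))) = x := by
  set y : Fin N × Fin 2 → ℝ := x - η • (Aᵀ *ᵥ (A *ᵥ x - b)) with hy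
  have hyp : ∀ p, y p = (1 - η * γ p.1) * x p := by
    intro p
    simp [hy, hstat]
    ring
  have hc : ∀ i, 0 < 1 - η * γ i := by
    intro i
    have := hγ i
    have h2 : η * γ i < η * (1 / η) := by
      exact mul_lt_mul_of_pos_left this hη
    rw [mul_one_div_cancel (ne_of_gt hη)] at h2
    linarith
  have hnorm : ∀ i, pairNorm y i = 1 - η * γ i := by
    intro i
    rw [pairNorm, hyp, hyp]
    have h : ((1 - η * γ i) * x (i, 0)) ^ 2 + ((1 - η * γ i) * x (i, 1)) ^ 2
        = (1 - η * γ i) ^ 2 := by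
      rw [mul_pow, mul_pow, ← mul_add, hx i, mul_one]
    simp only [h]
    rw [Real.sqrt_sq (le_of_lt (hc i))]
  funext p
  have hxnz : ¬ (y (p.1, 0) = 0 ∧ y (p.1, 1) = 0) := by
    rintro ⟨h0, h1⟩
    rw [hyp] at h0 h1
    have hc' := hc p.1
    have hx0 : x (p.1, 0) = 0 := by
      rcases mul_eq_zero.mp h0 with h | h
      · linarith
      · exact h
    have hx1 : x (p.1, 1) = 0 := by
      rcases mul_eq_zero.mp h1 with h | h
      · linarith
      · exact h
    have := hx p.1
    rw [hx0, hx1] at this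
    norm_num at this
  rw [umProj]
  simp only [hxnz, if_false]
  rw [hyp, hnorm, mul_div_cancel_left₀ _ (ne_of_gt (hc p.1))]
end

section
/- Let x* ∈ C be a fixed point of PGD with step η > 0, i.e., x* = P_C(x* - η Aᵀ(A x* - b)). Then there exists γ ∈ R^N with Aᵀ(A x* - b) = (diag(γ) ⊗ I_2) x* and γ_i ≤ 1/η for all i, with γ_i < 1/η whenever S_i(x*) ≠ [1,0]ᵀ. -/
open Matrix

/-! With `y := x - η • Aᵀ(Ax - b)`, every coordinate pair of `y` is the pair of `P_C y = x` scaled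
by its own length `rᵢ ≥ 0`, so `η Aᵀ(Ax - b) = ((1 - rᵢ) xᵢ)ᵢ` and `γᵢ := (1 - rᵢ) / η` works.
The length `rᵢ` can vanish only when `yᵢ = 0`, and then the convention `P([0,0]) = [1,0]ᵀ`
forces `xᵢ = [1,0]ᵀ`. -/

theorem pairNorm_nonneg {N : ℕ} (y : Fin N × Fin 2 → ℝ) (i : Fin N) : 0 ≤ pairNorm y i :=
  Real.sqrt_nonneg _

theorem pairNorm_eq_zero_iff {N : ℕ} (y : Fin N × Fin 2 → ℝ) (i : Fin N) :
    pairNorm y i = 0 ↔ y (i, 0) = 0 ∧ y (i, 1) = 0 := by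
  rw [pairNorm, Real.sqrt_eq_zero (by positivity)]
  constructor
  · intro h
    exact ⟨by nlinarith [sq_nonneg (y (i, 0)), sq_nonneg (y (i, 1))],
      by nlinarith [sq_nonneg (y (i, 0)), sq_nonneg (y (i, 1))]⟩
  · rintro ⟨h0, h1⟩
    simp [h0, h1]

theorem eq_pairNorm_mul_umProj {N : ℕ} (y : Fin N × Fin 2 → ℝ) (p : Fin N × Fin 2) :
    y p = pairNorm y p.1 * umProj y p := by
  obtain ⟨i, j⟩ := p
  by_cases hy : y (i, 0) = 0 ∧ y (i, 1) = 0
  · rw [(pairNorm_eq_zero_iff y i).2 hy, zero_mul]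
    fin_cases j
    exacts [hy.1, hy.2]
  · have hr : pairNorm y i ≠ 0 := mt (pairNorm_eq_zero_iff y i).1 hy
    simp only [umProj, if_neg hy]
    field_simp

theorem pairNorm_pos_of_umProj_ne {N : ℕ} (y : Fin N × Fin 2 → ℝ) (i : Fin N)
    (h : ¬(umProj y (i, 0) = 1 ∧ umProj y (i, 1) = 0)) : 0 < pairNorm y i := by
  refine (pairNorm_nonneg y i).lt_of_ne fun h0 => h ?_
  have hy := (pairNorm_eq_zero_iff y i).1 h0.symm
  simp [umProj, hy]

theorem fixed_point_is_stationary_general {M N : ℕ}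
    (A : Matrix (Fin M × Fin 2) (Fin N × Fin 2) ℝ) (b : Fin M × Fin 2 → ℝ)
    (x : Fin N × Fin 2 → ℝ)
    (η : ℝ) (hη : 0 < η)
    (hfix : umProj (x - η • (Aᵀ *ᵥ (A *ᵥ x - b))) = x) :
    ∃ γ : Fin N → ℝ,
      (Aᵀ *ᵥ (A *ᵥ x - b)) = (fun p => γ p.1 * x p) ∧
      ∀ i, γ i ≤ 1 / η ∧ (¬(x (i, 0) = 1 ∧ x (i, 1) = 0) → γ i < 1 / η) := by
  set g := Aᵀ *ᵥ (A *ᵥ x - b)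
  set r := pairNorm (x - η • g)
  refine ⟨fun i => (1 - r i) / η, funext fun p => ?_, fun i => ⟨?_, fun hi => ?_⟩⟩
  · have hp : x p - η * g p = r p.1 * x p := by
      simpa [hfix] using eq_pairNorm_mul_umProj (x - η • g) p
    field_simp
    linarith
  · exact div_le_div_of_nonneg_right (by linarith [pairNorm_nonneg (x - η • g) i]) hη.le
  · rw [← hfix] at hi
    exact div_lt_div_of_pos_right (by linarith [pairNorm_pos_of_umProj_ne _ i hi]) hη

theorem fixed_point_is_stationary {M N : ℕ}
    (A : Matrix (Fin M × Fin 2) (Fin N × Fin 2) ℝ) (b : Fin M × Fin 2 → ℝ)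
    (x : Fin N × Fin 2 → ℝ) (hx : ∀ i, x (i, 0) ^ 2 + x (i, 1) ^ 2 = 1)
    (η : ℝ) (hη : 0 < η)
    (hfix : umProj (x - η • (Aᵀ *ᵥ (A *ᵥ x - b))) = x) :
    ∃ γ : Fin N → ℝ,
      (Aᵀ *ᵥ (A *ᵥ x - b)) = (fun p => γ p.1 * x p) ∧
      ∀ i, γ i ≤ 1 / η ∧ (¬(x (i, 0) = 1 ∧ x (i, 1) = 0) → γ i < 1 / η) :=
  fixed_point_is_stationary_general A b x η hη hfix
end
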